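/- Let α ∈ ℝ and let r : ℝ → ℝ be three times differentiable, set u_P(y) = r(y)·e^{iα}, and suppose u_P satisfies the modified Painlevé II equation u_P''(y) + y·u_P(y) + 2·u_P(y)·|u_P(y)|² = 0 for all y ∈ ℝ. Define u₁(y) = i·u_P(y)/(3^{1/3}·√2). Then u₁ satisfies the third-order equation u₁'''(y) + y·u₁'(y) + u₁(y) = -3^{5/3}·(3·|u₁(y)|²·u₁'(y) + u₁(y)²·conj(u₁'(y))) for all y ∈ ℝ. -/

import Mathlib

/-!
Writing `u_P = r e^{iα}` with `r` real, the modified Painlevé II equation becomes the real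
equation `r'' = -y r - 2 r³`, and differentiating it gives `r''' + y r' + r = -6 r² r'`.
Since `u₁ = κ r` for the constant `κ = i e^{iα} / (3^{1/3} √2)`, the left-hand side of the
third-order equation is `-6 κ r² r'`, while its right-hand side is `-3^{5/3} · 4 |κ|² κ r² r'`;
they agree because `3^{5/3} |κ|² = 3/2`.
-/

open Complex ComplexConjugate

noncomputable section

/-- The constant-phase Painlevé II profile `u_P(y) = r(y)·e^{iα}`. -/
def uP (α : ℝ) (r : ℝ → ℝ) : ℝ → ℂ :=
  fun y => (r y : ℂ) * Complex.exp (Complex.I * (α : ℂ))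

/-- The leading asymptotic coefficient `u₁(y) = i·u_P(y)/(3^{1/3}·√2)`. -/
def u₁ (α : ℝ) (r : ℝ → ℝ) : ℝ → ℂ :=
  fun y => Complex.I * uP α r y / ((((3 : ℝ) ^ ((1 : ℝ) / 3) * Real.sqrt 2 : ℝ)) : ℂ)

lemma deriv_ofReal_mul_const {f : ℝ → ℝ} (hf : Differentiable ℝ f) (a : ℂ) :
    deriv (fun y => (f y : ℂ) * a) = fun y => ((deriv f y : ℝ) : ℂ) * a :=
  funext fun y => ((hf y).hasDerivAt.ofReal_comp.mul_const a).deriv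

lemma normSq_exp_I_mul_ofReal (x : ℝ) : normSq (exp (I * x)) = 1 := by
  rw [normSq_eq_norm_sq, norm_exp_I_mul_ofReal, one_pow]

lemma deriv_deriv_uP (α : ℝ) {r : ℝ → ℝ} (hr : Differentiable ℝ r)
    (hr' : Differentiable ℝ (deriv r)) :
    deriv (deriv (uP α r)) = fun y => ((deriv (deriv r) y : ℝ) : ℂ) * exp (I * α) := by
  unfold uP
  rw [deriv_ofReal_mul_const hr, deriv_ofReal_mul_const hr']

lemma normSq_uP (α : ℝ) (r : ℝ → ℝ) (y : ℝ) : normSq (uP α r y) = r y ^ 2 := by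
  unfold uP
  rw [normSq_mul, normSq_exp_I_mul_ofReal, normSq_ofReal]
  ring

namespace PainleveII

variable {r : ℝ → ℝ}

lemma deriv_deriv_eq_of_uP {α : ℝ} (hr : Differentiable ℝ r) (hr' : Differentiable ℝ (deriv r))
    (hP : ∀ y : ℝ, deriv (deriv (uP α r)) y + (y : ℂ) * uP α r y +
      2 * uP α r y * (normSq (uP α r y) : ℂ) = 0) (y : ℝ) :
    deriv (deriv r) y = -(y * r y) - 2 * r y ^ 3 := by
  have h := hP y
  rw [deriv_deriv_uP α hr hr', normSq_uP] at h
  have hreal : ((deriv (deriv r) y + y * r y + 2 * r y ^ 3 : ℝ) : ℂ) * exp (I * α) = 0 := by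
    rw [← h, uP]
    push_cast
    ring
  have hsum := (mul_eq_zero.mp hreal).resolve_right (exp_ne_zero _)
  rw [ofReal_eq_zero] at hsum
  linarith

lemma hasDerivAt_deriv_deriv (hr : Differentiable ℝ r)
    (hPII : ∀ y, deriv (deriv r) y = -(y * r y) - 2 * r y ^ 3) (y : ℝ) :
    HasDerivAt (deriv (deriv r)) (-r y - y * deriv r y - 6 * r y ^ 2 * deriv r y) y := by
  rw [funext hPII]
  have hr₁ := (hr y).hasDerivAt
  refine (((hasDerivAt_id' y).fun_mul hr₁).fun_neg.fun_sub
    ((hr₁.fun_pow 3).const_mul 2)).congr_deriv ?_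
  norm_num
  ring

end PainleveII

def u₁Coeff (α : ℝ) : ℂ :=
  I * exp (I * α) / (((3 : ℝ) ^ ((1 : ℝ) / 3) * Real.sqrt 2 : ℝ) : ℂ)

lemma u₁_eq_ofReal_mul (α : ℝ) (r : ℝ → ℝ) : u₁ α r = fun y => (r y : ℂ) * u₁Coeff α := by
  funext y
  rw [u₁, uP, u₁Coeff]
  ring

lemma three_rpow_five_thirds_mul_normSq_u₁Coeff (α : ℝ) :
    (3 : ℝ) ^ ((5 : ℝ) / 3) * normSq (u₁Coeff α) = 3 / 2 := by
  rw [u₁Coeff, normSq_div, normSq_mul, normSq_I, normSq_exp_I_mul_ofReal, normSq_ofReal,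
    mul_mul_mul_comm, Real.mul_self_sqrt (by norm_num)]
  set t : ℝ := (3 : ℝ) ^ ((1 : ℝ) / 3)
  have ht : t ^ 3 = 3 := by
    rw [← Real.rpow_natCast, ← Real.rpow_mul (by norm_num)]
    norm_num
  have h53 : (3 : ℝ) ^ ((5 : ℝ) / 3) = t ^ 5 := by
    rw [← Real.rpow_natCast, ← Real.rpow_mul (by norm_num)]
    norm_num
  rw [h53]
  field_simp
  exact ht

open PainleveII in
theorem first_hierarchy_equation_general (α : ℝ) (r : ℝ → ℝ)
    (hr : Differentiable ℝ r) (hr' : Differentiable ℝ (deriv r))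
    (hP : ∀ y : ℝ,
      deriv (deriv (uP α r)) y + (y : ℂ) * uP α r y +
        2 * uP α r y * (Complex.normSq (uP α r y) : ℂ) = 0) :
    ∀ y : ℝ,
      deriv (deriv (deriv (u₁ α r))) y + (y : ℂ) * deriv (u₁ α r) y + u₁ α r y =
        -((((3 : ℝ) ^ ((5 : ℝ) / 3) : ℝ)) : ℂ) *
          (3 * (Complex.normSq (u₁ α r y) : ℂ) * deriv (u₁ α r) y +
            (u₁ α r y) ^ 2 * conj (deriv (u₁ α r) y)) := by
  intro y
  have hPII := deriv_deriv_eq_of_uP hr hr' hP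
  have h₃ := (hasDerivAt_deriv_deriv hr hPII y).ofReal_comp.mul_const (u₁Coeff α)
  have hκ : (((3 : ℝ) ^ ((5 : ℝ) / 3) : ℝ) : ℂ) * (normSq (u₁Coeff α) : ℂ) = 3 / 2 := by
    rw [← ofReal_mul, three_rpow_five_thirds_mul_normSq_u₁Coeff]
    norm_num
  rw [u₁_eq_ofReal_mul, deriv_ofReal_mul_const hr, deriv_ofReal_mul_const hr', h₃.deriv]
  simp only [normSq_ofReal, map_mul, conj_ofReal]
  -- keeps `push_cast` from turning the real power `3 ^ (5/3)` into a complex one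
  set K : ℂ := (((3 : ℝ) ^ ((5 : ℝ) / 3) : ℝ) : ℂ)
  push_cast
  linear_combination (4 * (r y : ℂ) ^ 2 * (deriv r y : ℝ) * u₁Coeff α) * hκ
    + K * ((r y : ℂ) ^ 2 * (deriv r y : ℝ) * u₁Coeff α) * mul_conj (u₁Coeff α)

/-- If `u_P = r·e^{iα}` satisfies the modified Painlevé II equation
`u_P'' + y·u_P + 2·u_P·|u_P|² = 0`, then `u₁ = i·u_P/(3^{1/3}√2)` satisfies
`u₁''' + y·u₁' + u₁ = -3^{5/3}·(3|u₁|²u₁' + u₁²·conj(u₁'))`. -/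
theorem first_hierarchy_equation (α : ℝ) (r : ℝ → ℝ)
    (hr : Differentiable ℝ r) (hr' : Differentiable ℝ (deriv r))
    (hr'' : Differentiable ℝ (deriv (deriv r)))
    (hP : ∀ y : ℝ,
      deriv (deriv (uP α r)) y + (y : ℂ) * uP α r y +
        2 * uP α r y * (Complex.normSq (uP α r y) : ℂ) = 0) :
    ∀ y : ℝ,
      deriv (deriv (deriv (u₁ α r))) y + (y : ℂ) * deriv (u₁ α r) y + u₁ α r y =
        -((((3 : ℝ) ^ ((5 : ℝ) / 3) : ℝ)) : ℂ) *
          (3 * (Complex.normSq (u₁ α r y) : ℂ) * deriv (u₁ α r) y +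
            (u₁ α r y) ^ 2 * conj (deriv (u₁ α r) y)) :=
  first_hierarchy_equation_general α r hr hr' hP
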